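/- Let M be a finite subset of a countable group G, let V be a finite-dimensional vector space over a field k, and let S = L(V^M, V). Then for every s ∈ S^G, the linear NUCA σ_s : V^G → V^G is pre-injective if and only if the dual linear NUCA σ_{s*} : (V*)^G → (V*)^G is surjective. -/

import Mathlib

open scoped BigOperators Pointwise

/-- The linear NUCA `σ_s : V^G → V^G` with memory `M ⊆ G` associated with the
configuration of local defining maps `s`, given in coefficient form:
`σ_s(x)(g) = ∑_{m ∈ M} s(g,m)(x(g·m))`. -/
def nucaMap {k V G : Type*} [Field k] [AddCommGroup V] [Module k V] [Group G]
    (M : Finset G) (s : G → G → (V →ₗ[k] V)) (x : G → V) : G → V :=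
  fun g => ∑ m ∈ M, s g m (x (g * m))

/-- Two configurations are asymptotic if they agree outside a finite set. -/
def Asymptotic {G A : Type*} (x y : G → A) : Prop :=
  Set.Finite {g : G | x g ≠ y g}

/-- A map `σ : V^G → V^G` is pre-injective if `σ(x) = σ(y)` implies `x = y` whenever
`x` and `y` are asymptotic. -/
def PreInjective {G V : Type*} (σ : (G → V) → (G → V)) : Prop :=
  ∀ x y : G → V, Asymptotic x y → σ x = σ y → x = y

/-- A map `σ : V^G → V^G` is post-surjective if for all `x, y` with `y` asymptotic to
`σ(x)` there is `z` asymptotic to `x` with `σ(z) = y`. -/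
def PostSurjective {G V : Type*} (σ : (G → V) → (G → V)) : Prop :=
  ∀ x y : G → V, Asymptotic y (σ x) → ∃ z : G → V, Asymptotic z x ∧ σ z = y

/-- The dual configuration `s*` of local defining maps, in coefficient form:
`s*(g,m) = (s(g·m, m⁻¹))ᵀ`, the transpose (dual map) of `s(g·m, m⁻¹)`. -/
def dualCoeff {k V G : Type*} [Field k] [AddCommGroup V] [Module k V] [Group G]
    (s : G → G → (V →ₗ[k] V)) :
    G → G → (Module.Dual k V →ₗ[k] Module.Dual k V) :=
  fun g m => (s (g * m) m⁻¹).dualMap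

section Aux

variable {k V G : Type*} [Field k] [AddCommGroup V] [Module k V] [Group G] [DecidableEq G]

/-- The restriction of `σ_s` to finitely supported configurations, as a linear map. -/
noncomputable def nucaFin (M : Finset G) (s : G → G → (V →ₗ[k] V)) : (G →₀ V) →ₗ[k] (G →₀ V) :=
  Finsupp.lsum k (fun g => ∑ m ∈ M, (Finsupp.lsingle (g * m⁻¹)).comp (s (g * m⁻¹) m))

lemma nucaMap_add (M : Finset G) (s : G → G → (V →ₗ[k] V)) (x y : G → V) :
    nucaMap M s (x + y) = nucaMap M s x + nucaMap M s y := by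
  funext g
  simp [nucaMap, Finset.sum_add_distrib]

lemma nucaMap_sub (M : Finset G) (s : G → G → (V →ₗ[k] V)) (x y : G → V) :
    nucaMap M s (x - y) = nucaMap M s x - nucaMap M s y := by
  funext g
  simp [nucaMap, Finset.sum_sub_distrib]

lemma nucaMap_zero (M : Finset G) (s : G → G → (V →ₗ[k] V)) :
    nucaMap M s 0 = 0 := by
  funext g
  simp [nucaMap]

lemma nucaFin_coe (M : Finset G) (s : G → G → (V →ₗ[k] V)) (x : G →₀ V) :
    ⇑(nucaFin (k := k) M s x) = nucaMap M s ⇑x := by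
  induction x using Finsupp.induction_linear with
  | zero => simp [nucaMap_zero]
  | add f g hf hg =>
      rw [map_add, Finsupp.coe_add, Finsupp.coe_add, hf, hg, nucaMap_add]
  | single g0 v =>
      funext h
      rw [nucaFin, Finsupp.lsum_single]
      simp only [LinearMap.sum_apply, LinearMap.comp_apply, Finsupp.lsingle_apply,
        Finsupp.finset_sum_apply, Finsupp.single_apply, nucaMap]
      refine Finset.sum_congr rfl fun m hm => ?_
      by_cases hc : g0 = h * m
      · subst hc
        simp
      · rw [if_neg (fun hEq => hc (by rw [← hEq, inv_mul_cancel_right])),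
          if_neg hc, map_zero]

/-- Adjunction: the dual NUCA is the transpose of `nucaFin` under the natural pairing. -/
lemma adj (M : Finset G) (s : G → G → (V →ₗ[k] V)) (ω : G → Module.Dual k V) (x : G →₀ V) :
    Finsupp.lsum k (nucaMap M⁻¹ (dualCoeff s) ω) x
      = Finsupp.lsum k ω (nucaFin (k := k) M s x) := by
  induction x using Finsupp.induction_linear with
  | zero => simp
  | add f g hf hg => rw [map_add, map_add, hf, hg, map_add]
  | single g0 v =>
      rw [Finsupp.lsum_single, nucaFin, Finsupp.lsum_single]
      simp only [nucaMap, dualCoeff, LinearMap.sum_apply, map_sum, LinearMap.comp_apply,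
        Finsupp.lsingle_apply, Finsupp.lsum_single, LinearMap.dualMap_apply]
      rw [Finset.sum_inv_index]
      refine Finset.sum_congr rfl fun m hm => ?_
      simp [mul_inv_cancel_right]

end Aux

/-- A linear NUCA `σ_s` over a finite-dimensional vector space alphabet is
pre-injective if and only if its dual `σ_{s*}` is surjective. -/
theorem stmt10 {k V G : Type*} [Field k] [AddCommGroup V] [Module k V]
    [FiniteDimensional k V] [Group G] [Countable G] [DecidableEq G]
    (M : Finset G) (s : G → G → (V →ₗ[k] V)) (hs : ∀ g, ∀ m ∉ M, s g m = 0) :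
    PreInjective (nucaMap M s) ↔
      Function.Surjective (nucaMap M⁻¹ (dualCoeff s)) := by
  have key : ∀ ω : G → Module.Dual k V,
      Finsupp.lsum k (nucaMap M⁻¹ (dualCoeff s) ω)
        = (nucaFin (k := k) M s).dualMap (Finsupp.lsum k ω) := by
    intro ω
    apply LinearMap.ext
    intro x
    exact adj M s ω x
  let e : (G → Module.Dual k V) ≃ₗ[k] ((G →₀ V) →ₗ[k] k) := Finsupp.lsum k
  have hequiv : Function.Surjective (nucaMap M⁻¹ (dualCoeff s)) ↔
      Function.Surjective (nucaFin (k := k) M s).dualMap := by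
    constructor
    · intro h φ
      obtain ⟨ω, hω⟩ := h (e.symm φ)
      exact ⟨e ω, by rw [show e ω = Finsupp.lsum k ω from rfl, ← key, hω]; simp [e]⟩
    · intro h ω
      obtain ⟨φ, hφ⟩ := h (Finsupp.lsum k ω)
      refine ⟨e.symm φ, ?_⟩
      apply e.injective
      rw [show e (nucaMap M⁻¹ (dualCoeff s) (e.symm φ)) = Finsupp.lsum k (nucaMap M⁻¹ (dualCoeff s) (e.symm φ)) from rfl, key]
      simpa [e] using hφ
  rw [hequiv, LinearMap.dualMap_surjective_iff]
  constructor
  · intro hpre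
    rw [injective_iff_map_eq_zero]
    intro f hf
    have h1 : Asymptotic (⇑f) (0 : G → V) := (Set.Finite.subset f.finite_support
      (by intro g hg; exact hg))
    have h2 : nucaMap M s ⇑f = nucaMap M s 0 := by
      rw [nucaMap_zero, ← nucaFin_coe, hf]; rfl
    have := hpre ⇑f 0 h1 h2
    ext g
    exact congrFun this g
  · intro hinj x y hxy hσ
    have hfin : (Function.support (x - y)).Finite := by
      apply hxy.subset
      intro g hg
      simpa [sub_ne_zero] using hg
    set d : G →₀ V := Finsupp.ofSupportFinite (x - y) hfin with hd
    have hdc : ⇑d = x - y := rfl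
    have : nucaFin (k := k) M s d = 0 := by
      ext g
      have h1 : nucaMap M s (⇑d) = 0 := by
        rw [hdc, nucaMap_sub, hσ, sub_self]
      rw [Finsupp.zero_apply]
      calc (nucaFin (k := k) M s d) g = nucaMap M s ⇑d g := congrFun (nucaFin_coe M s d) g
        _ = 0 := congrFun h1 g
    have hd0 : d = 0 := hinj this
    funext g
    have : (x - y) g = 0 := by rw [← hdc, hd0]; rfl
    have := sub_eq_zero.mp this
    exact this
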